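/- arXiv:2509.18120 — 7 statements merged into one kernel-verified Lean document; each statement's English description precedes it below -/
import Mathlib

section
/- Define the potential function F(d) = ε(d) − Σ_{i<N} (c_i/z_i)·d_i, where z_i = Σ_{j≠i} γ_{i,j}·(ξ − φ_j) − ψ_i. Then the data-generation game is an exact weighted potential game with weights z_i and potential F: for every organization i and every two strategy profiles d, d' ∈ ℝ^N that agree in every coordinate except possibly the i-th, U_i(d) − U_i(d') = z_i·(F(d) − F(d')). -/
open Real Finset

/-! Since `Σ_{j≠i} γ_{i,j}·(ξ − φ_j) = z_i + ψ_i`, the utility is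
`U_i(d) = z_i·ε(d) − c_i·d_i + (terms depending only on d_{−i})`, the baseline `ε_{−i}(d)`
being among the latter. Likewise `z_i·F(d) = z_i·ε(d) − c_i·d_i + (terms depending only on d_{−i})`,
so under a unilateral deviation of `i` both sides change by the same amount. -/

/-- Global model error: `ε(d) = exp(((1/N)·Σ_j (α·(L_j + d_j)^(−β) − δ) − 1)/ϱ)`. -/
noncomputable def epsGlob (N : ℕ) (α β δ ϱ : ℝ) (L d : Fin N → ℝ) : ℝ :=
  Real.exp (((1 / (N : ℝ)) * ∑ j, (α * (L j + d j) ^ (-β) - δ) - 1) / ϱ)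

/-- The weight `z_i = Σ_{j≠i} γ_{i,j}·(ξ − φ_j) − ψ_i`. -/
noncomputable def zWeight (N : ℕ) (ψ φ : Fin N → ℝ) (γ : Fin N → Fin N → ℝ) (ξ : ℝ)
    (i : Fin N) : ℝ :=
  (∑ j ∈ Finset.univ.erase i, γ i j * (ξ - φ j)) - ψ i

/-- Organization `i`'s utility:
`U_i(d) = ψ_i·(ε_0 − ε(d)) + Σ_{j≠i} (ξ − φ_j)·γ_{i,j}·Δ_i(d) − c_i·d_i − K_i`,
where `Δ_i(d) = ε(d) − ε(d with i-th coordinate 0)`. -/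
noncomputable def utility (N : ℕ) (α β δ ϱ : ℝ) (L c ψ φ K : Fin N → ℝ)
    (γ : Fin N → Fin N → ℝ) (ξ ε0 : ℝ) (i : Fin N) (d : Fin N → ℝ) : ℝ :=
  ψ i * (ε0 - epsGlob N α β δ ϱ L d)
    + ∑ j ∈ Finset.univ.erase i, (ξ - φ j) * γ i j *
        (epsGlob N α β δ ϱ L d - epsGlob N α β δ ϱ L (Function.update d i 0))
    - c i * d i - K i

/-- The potential function `F(d) = ε(d) − Σ_i (c_i/z_i)·d_i`. -/
noncomputable def potential (N : ℕ) (α β δ ϱ : ℝ) (L c z : Fin N → ℝ)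
    (d : Fin N → ℝ) : ℝ :=
  epsGlob N α β δ ϱ L d - ∑ i, (c i / z i) * d i

theorem Fintype.sum_sub_sum_eq_of_eq_of_ne {ι M : Type*} [Fintype ι] [AddCommGroup M]
    {f g : ι → M} (i : ι) (h : ∀ j, j ≠ i → f j = g j) :
    ∑ j, f j - ∑ j, g j = f i - g i := by
  rw [← Finset.sum_sub_distrib]
  exact Finset.sum_eq_single i (fun j _ hj => by rw [h j hj, sub_self]) (by simp)

theorem Function.update_eq_update_of_eq_of_ne {ι β : Type*} [DecidableEq ι] {f g : ι → β}
    (i : ι) (b : β) (h : ∀ j, j ≠ i → f j = g j) :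
    Function.update f i b = Function.update g i b := by
  funext j
  rcases eq_or_ne j i with rfl | hj
  · simp
  · simp [Function.update_of_ne hj, h j hj]

theorem utility_eq (N : ℕ) (α β δ ϱ : ℝ) (L c ψ φ K : Fin N → ℝ) (γ : Fin N → Fin N → ℝ)
    (ξ ε0 : ℝ) (i : Fin N) (d : Fin N → ℝ) :
    utility N α β δ ϱ L c ψ φ K γ ξ ε0 i d
      = ψ i * ε0 + zWeight N ψ φ γ ξ i * epsGlob N α β δ ϱ L d
        - (zWeight N ψ φ γ ξ i + ψ i) * epsGlob N α β δ ϱ L (Function.update d i 0)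
        - c i * d i - K i := by
  have hsum : ∑ j ∈ Finset.univ.erase i, (ξ - φ j) * γ i j = zWeight N ψ φ γ ξ i + ψ i := by
    simp only [zWeight, sub_add_cancel, mul_comm]
  rw [utility, ← Finset.sum_mul, hsum]
  ring

theorem mul_potential_sub_potential (N : ℕ) (α β δ ϱ : ℝ) (L c z : Fin N → ℝ) (i : Fin N)
    (hz : z i ≠ 0) (d d' : Fin N → ℝ) (hagree : ∀ j, j ≠ i → d j = d' j) :
    z i * (potential N α β δ ϱ L c z d - potential N α β δ ϱ L c z d')
      = z i * (epsGlob N α β δ ϱ L d - epsGlob N α β δ ϱ L d') - c i * (d i - d' i) := by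
  have hcost : ∑ j, c j / z j * d j - ∑ j, c j / z j * d' j = c i / z i * d i - c i / z i * d' i :=
    Fintype.sum_sub_sum_eq_of_eq_of_ne i fun j hj => by rw [hagree j hj]
  rw [potential, potential, sub_sub_sub_comm, hcost]
  field_simp

theorem weighted_potential_game_general (N : ℕ) (α β δ ϱ : ℝ) (L c ψ φ K : Fin N → ℝ)
    (γ : Fin N → Fin N → ℝ)
    (ξ : ℝ) (ε0 : ℝ) 
    (hz : ∀ i, zWeight N ψ φ γ ξ i ≠ 0)
    (i : Fin N) (d d' : Fin N → ℝ)
    (hagree : ∀ j, j ≠ i → d j = d' j) :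
    utility N α β δ ϱ L c ψ φ K γ ξ ε0 i d - utility N α β δ ϱ L c ψ φ K γ ξ ε0 i d'
      = zWeight N ψ φ γ ξ i *
          (potential N α β δ ϱ L c (zWeight N ψ φ γ ξ) d
            - potential N α β δ ϱ L c (zWeight N ψ φ γ ξ) d') := by
  rw [utility_eq, utility_eq, Function.update_eq_update_of_eq_of_ne i 0 hagree,
    mul_potential_sub_potential N α β δ ϱ L c _ i (hz i) d d' hagree]
  ring

/-- The game is an exact weighted potential game with weights `z_i`
and potential `F(d) = ε(d) − Σ_i (c_i/z_i)·d_i`: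
`U_i(d) − U_i(d') = z_i·(F(d) − F(d'))` for unilateral deviations of `i`. -/
theorem weighted_potential_game (N : ℕ) (hN : 1 ≤ N) (α β δ ϱ : ℝ) (hα : 0 < α) (hβ : 0 < β)
    (hϱ : 0 < ϱ) (hδ : 0 ≤ δ) (L c ψ φ K : Fin N → ℝ)
    (hL : ∀ i, 0 < L i) (hc : ∀ i, 0 < c i) (hψ : ∀ i, 0 < ψ i) (hφ : ∀ j, 0 < φ j)
    (hK : ∀ i, 0 ≤ K i)
    (γ : Fin N → Fin N → ℝ) (hγ : ∀ i j, γ i j ∈ Set.Icc (0 : ℝ) 1)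
    (ξ : ℝ) (hξ0 : 0 ≤ ξ) (hξ : ∀ j, ξ ≤ φ j) (ε0 : ℝ) 
    (hz : ∀ i, zWeight N ψ φ γ ξ i ≠ 0)
    (i : Fin N) (d d' : Fin N → ℝ) (hd : ∀ j, 0 ≤ d j) (hd' : ∀ j, 0 ≤ d' j)
    (hagree : ∀ j, j ≠ i → d j = d' j) :
    utility N α β δ ϱ L c ψ φ K γ ξ ε0 i d - utility N α β δ ϱ L c ψ φ K γ ξ ε0 i d'
      = zWeight N ψ φ γ ξ i *
          (potential N α β δ ϱ L c (zWeight N ψ φ γ ξ) d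
            - potential N α β δ ϱ L c (zWeight N ψ φ γ ξ) d') :=
  weighted_potential_game_general N α β δ ϱ L c ψ φ K γ ξ ε0 hz i d d' hagree
end

section
/- The potential function F(d) = ε(d) − Σ_{i<N} (c_i/z_i)·d_i is strictly convex on the box ∏_{i<N} [m, M] ⊂ ℝ^N, where 0 ≤ m < M. -/
open Real Finset

/-!
Each `t ↦ α (L_j + t)^(-β) - δ` is strictly convex on `[m, M]` (as `x^p` is on `(0, ∞)` for
`p < 0`), so their sum over the coordinates is strictly convex on the box. The exponent of `ε` is
an increasing affine function of that sum, and `exp` is convex and strictly increasing, so `ε` is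
strictly convex; subtracting the linear cost term preserves this.
-/

theorem strictConvexOn_rpow_of_neg {p : ℝ} (hp : p < 0) :
    StrictConvexOn ℝ (Set.Ioi 0) fun x : ℝ => x ^ p := by
  refine strictConvexOn_of_deriv2_pos' (convex_Ioi 0)
    (continuousOn_id.rpow_const fun x hx => Or.inl (ne_of_gt hx)) fun x hx => ?_
  rw [iter_deriv_rpow_const]
  have hpoch : (descPochhammer ℝ 2).eval p = p * (p - 1) := by
    simp [descPochhammer_succ_right]
  rw [hpoch]
  exact mul_pos (mul_pos_of_neg_of_neg hp (by linarith)) (rpow_pos_of_pos hx _)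

theorem StrictConvexOn.smul {𝕜 E β : Type*} [Field 𝕜] [LinearOrder 𝕜]
    [IsStrictOrderedRing 𝕜] [AddCommGroup E] [Module 𝕜 E] [AddCommMonoid β] [PartialOrder β] [Module 𝕜 β]
    [PosSMulStrictMono 𝕜 β] {s : Set E} {f : E → β} {c : 𝕜} (hc : 0 < c)
    (hf : StrictConvexOn 𝕜 s f) : StrictConvexOn 𝕜 s fun x => c • f x := by
  refine ⟨hf.1, fun x hx y hy hxy a b ha hb hab => ?_⟩
  calc c • f (a • x + b • y) < c • (a • f x + b • f y) :=
        smul_lt_smul_of_pos_left (hf.2 hx hy hxy ha hb hab) hc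
    _ = a • c • f x + b • c • f y := by rw [smul_add, smul_comm c a, smul_comm c b]

theorem StrictConvexOn.sum_pi {𝕜 ι E β : Type*} [Fintype ι] [Field 𝕜] [LinearOrder 𝕜]
    [IsStrictOrderedRing 𝕜] [AddCommGroup E] [Module 𝕜 E] [AddCommMonoid β] [PartialOrder β]
    [IsOrderedCancelAddMonoid β] [Module 𝕜 β]
    {s : ι → Set E} {f : ι → E → β} (hf : ∀ i, StrictConvexOn 𝕜 (s i) (f i)) :
    StrictConvexOn 𝕜 (Set.univ.pi s) fun x => ∑ i, f i (x i) := by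
  refine ⟨convex_pi fun i _ => (hf i).1, fun x hx y hy hxy a b ha hb hab => ?_⟩
  obtain ⟨j, hj⟩ := Function.ne_iff.1 hxy
  calc ∑ i, f i ((a • x + b • y) i) < ∑ i, (a • f i (x i) + b • f i (y i)) :=
        Finset.sum_lt_sum
          (fun i _ => (hf i).convexOn.2 (hx i trivial) (hy i trivial) ha.le hb.le hab)
          ⟨j, mem_univ j, (hf j).2 (hx j trivial) (hy j trivial) hj ha hb hab⟩
    _ = a • ∑ i, f i (x i) + b • ∑ i, f i (y i) := by
        rw [Finset.sum_add_distrib, Finset.smul_sum, Finset.smul_sum]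

theorem ConvexOn.comp_strictConvexOn_of_strictMono {𝕜 E : Type*} [Field 𝕜] [LinearOrder 𝕜]
    [IsStrictOrderedRing 𝕜] [AddCommGroup E] [Module 𝕜 E] {s : Set E} {f : E → 𝕜} {g : 𝕜 → 𝕜}
    (hg : ConvexOn 𝕜 Set.univ g) (hf : StrictConvexOn 𝕜 s f) (hg' : StrictMono g) :
    StrictConvexOn 𝕜 s (g ∘ f) :=
  ⟨hf.1, fun _ hx _ hy hxy _ _ ha hb hab =>
    (hg' (hf.2 hx hy hxy ha hb hab)).trans_le (hg.2 trivial trivial ha.le hb.le hab)⟩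

theorem potential_strictConvexOn_general (N : ℕ) (hN : 1 ≤ N) (α β δ ϱ : ℝ) (hα : 0 < α) (hβ : 0 < β)
    (hϱ : 0 < ϱ) (L c z : Fin N → ℝ)
    (hL : ∀ i, 0 < L i)
    (m M : ℝ) (hm : 0 ≤ m) :
    StrictConvexOn ℝ (Set.univ.pi fun _ : Fin N => Set.Icc m M)
      (potential N α β δ ϱ L c z) := by
  have hlocal : ∀ j, StrictConvexOn ℝ (Set.Icc m M) fun t => α * (L j + t) ^ (-β) - δ := by
    intro j
    have hbox : Set.Icc m M ⊆ (fun t => L j + t) ⁻¹' Set.Ioi 0 := fun t ht => by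
      simp only [Set.mem_preimage, Set.mem_Ioi]; linarith [hL j, ht.1]
    have hshift := (strictConvexOn_rpow_of_neg (neg_neg_of_pos hβ)).translate_right (L j)
    exact ((hshift.subset hbox (convex_Icc m M)).smul hα).sub_concaveOn
      (concaveOn_const δ (convex_Icc m M))
  have hexponent : StrictConvexOn ℝ (Set.univ.pi fun _ : Fin N => Set.Icc m M)
      fun d => ((1 / (N : ℝ)) * ∑ j, (α * (L j + d j) ^ (-β) - δ) - 1) / ϱ := by
    have hN' : (0 : ℝ) < 1 / N := one_div_pos.2 (Nat.cast_pos.2 hN)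
    simpa only [div_eq_inv_mul ((_ : ℝ) - 1) ϱ, smul_eq_mul, Pi.sub_apply] using
      (((StrictConvexOn.sum_pi hlocal).smul hN').sub_concaveOn
        (concaveOn_const 1 (convex_pi fun _ _ => convex_Icc m M))).smul (inv_pos.2 hϱ)
  have hglobal : StrictConvexOn ℝ (Set.univ.pi fun _ : Fin N => Set.Icc m M)
      (epsGlob N α β δ ϱ L) :=
    convexOn_exp.comp_strictConvexOn_of_strictMono hexponent exp_strictMono
  exact hglobal.sub_concaveOn (((Fintype.linearCombination ℝ fun i => c i / z i).concaveOn
    hglobal.1).congr fun d _ => by simp [Fintype.linearCombination_apply, mul_comm])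

/-- The potential `F(d) = ε(d) − Σ_i (c_i/z_i)·d_i` is strictly convex
on the box `∏_i [m, M]` with `0 ≤ m < M`. -/
theorem potential_strictConvexOn (N : ℕ) (hN : 1 ≤ N) (α β δ ϱ : ℝ) (hα : 0 < α) (hβ : 0 < β)
    (hϱ : 0 < ϱ) (hδ : 0 ≤ δ) (L c z : Fin N → ℝ)
    (hL : ∀ i, 0 < L i) (hc : ∀ i, 0 < c i) (hz : ∀ i, z i ≠ 0)
    (m M : ℝ) (hm : 0 ≤ m) (hmM : m < M) :
    StrictConvexOn ℝ (Set.univ.pi fun _ : Fin N => Set.Icc m M)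
      (potential N α β δ ϱ L c z) :=
  potential_strictConvexOn_general N hN α β δ ϱ hα hβ hϱ L c z hL m M hm
end

section
/- The game possesses a pure-strategy Nash equilibrium: there exists a profile d* ∈ ∏_{i<N} [m, M] such that for every organization i and every deviation y ∈ [m, M], U_i(d* with its i-th coordinate replaced by y) ≤ U_i(d*). -/
/-!
Up to terms independent of `d i`, organization `i` minimises `P_i · ε(d) + c_i · d_i` with
`P_i > 0`, and `d_i ↦ ε(d)` is convex (an exponential of a convex power), so a first-order
condition at `d i` already makes it a best response. That condition involves the other
organizations only through the value `e = ε(d)`. Solving it for every organization at a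
prescribed level `e` and clamping to `[m, M]` gives a continuous profile `d(e)`, and a fixed
point `e = ε(d(e))`, which exists by the intermediate value theorem, is a Nash equilibrium.
-/

open Real Finset

open Function

lemma rpow_neg_tangent_le {β a b : ℝ} (hβ : 0 ≤ β) (ha : 0 < a) (hb : 0 < b) :
    a ^ (-β) - β * a ^ (-(β + 1)) * (b - a) ≤ b ^ (-β) := by
  have bernoulli := one_add_mul_self_le_rpow_one_add (s := a / b - 1)
    (by linarith [div_pos ha hb]) (p := β + 1) (by linarith)
  rw [add_sub_cancel, div_rpow ha.le hb.le] at bernoulli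
  simp only [rpow_neg ha.le, rpow_neg hb.le, rpow_add_one ha.ne', rpow_add_one hb.ne'] at *
  have hA := rpow_pos_of_pos ha β
  have hB := rpow_pos_of_pos hb β
  generalize a ^ β = A at *
  generalize b ^ β = B at *
  have key : B * (b + (β + 1) * (a - b)) ≤ A * a := by
    rw [le_div_iff₀ (by positivity)] at bernoulli
    field_simp at bernoulli
    linarith
  calc A⁻¹ - β * (A * a)⁻¹ * (b - a) = B * (b + (β + 1) * (a - b)) / (A * a * B) := by
        field_simp; ring
    _ ≤ A * a / (A * a * B) := by gcongr
    _ = B⁻¹ := by field_simp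

lemma monotoneOn_sub_mul_rpow_neg {c k p l : ℝ} (hk : 0 ≤ k) (hp : 0 ≤ p) :
    MonotoneOn (fun t => c - k * (l + t) ^ (-p)) (Set.Ioi (-l)) := by
  intro s hs t _ hst
  have := rpow_le_rpow_of_nonpos (by linarith [Set.mem_Ioi.1 hs]) (by linarith : l + s ≤ l + t)
    (by linarith : -p ≤ 0)
  exact sub_le_sub_left (mul_le_mul_of_nonneg_left this hk) c

lemma sub_mul_rpow_neg_eq_zero {c k p : ℝ} (hc : 0 < c) (hk : 0 < k) (hp : 0 < p) :
    c - k * ((k / c) ^ p⁻¹) ^ (-p) = 0 := by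
  rw [rpow_neg (by positivity), rpow_inv_rpow (by positivity) hp.ne']
  field_simp
  ring

lemma MonotoneOn.mul_sub_max_min_nonneg {g : ℝ → ℝ} {s : Set ℝ} (hg : MonotoneOn g s)
    {m M z y : ℝ} (hz : z ∈ s) (hgz : g z = 0) (hx : max m (min M z) ∈ s)
    (hy : y ∈ Set.Icc m M) : 0 ≤ g (max m (min M z)) * (y - max m (min M z)) := by
  rcases lt_trichotomy y (max m (min M z)) with hlt | heq | hgt
  · have : max m (min M z) ≤ z := by
      rcases max_cases m (min M z) with h | h <;> rcases min_cases M z with h' | h' <;>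
        linarith [hy.1, hy.2]
    exact mul_nonneg_of_nonpos_of_nonpos (hgz ▸ hg hx hz this) (by linarith)
  · simp [heq]
  · have : z ≤ max m (min M z) := by
      rcases max_cases m (min M z) with h | h <;> rcases min_cases M z with h' | h' <;>
        linarith [hy.1, hy.2]
    exact mul_nonneg (hgz ▸ hg hz hx this) (by linarith)

section

variable {N : ℕ} {α β δ ϱ : ℝ} {L : Fin N → ℝ}

lemma epsGlob_update (d : Fin N → ℝ) (i : Fin N) (y : ℝ) :
    epsGlob N α β δ ϱ L (update d i y) = epsGlob N α β δ ϱ L d *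
      exp (α / (N * ϱ) * ((L i + y) ^ (-β) - (L i + d i) ^ (-β))) := by
  have hsum : ∑ j, (α * (L j + update d i y j) ^ (-β) - δ) =
      ∑ j, (α * (L j + d j) ^ (-β) - δ) + α * ((L i + y) ^ (-β) - (L i + d i) ^ (-β)) := by
    simp only [apply_update (fun j t => α * (L j + t) ^ (-β) - δ), sum_update_of_mem (mem_univ i)]
    rw [← add_sum_erase _ _ (mem_univ i), sdiff_singleton_eq_erase]
    ring
  rw [epsGlob, epsGlob, ← exp_add, hsum]
  congr 1
  ring

lemma epsGlob_le_epsGlob_of_le (hα : 0 ≤ α) (hβ : 0 ≤ β) (hϱ : 0 ≤ ϱ) {d d' : Fin N → ℝ}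
    (hpos : ∀ j, 0 < L j + d j) (hle : d ≤ d') :
    epsGlob N α β δ ϱ L d' ≤ epsGlob N α β δ ϱ L d := by
  unfold epsGlob
  gcongr exp ((_ * ∑ j, (_ * ?_ - _) - _) / _) with j
  exact rpow_le_rpow_of_nonpos (hpos j) (by linarith [hle j]) (by linarith)

lemma continuous_epsGlob_comp {d : ℝ → Fin N → ℝ} (hd : ∀ j, Continuous fun t => d t j)
    (hpos : ∀ t j, 0 < L j + d t j) : Continuous fun t => epsGlob N α β δ ϱ L (d t) := by
  unfold epsGlob
  refine continuous_exp.comp (((continuous_const.mul (continuous_finsetSum _ fun j _ => ?_)).sub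
    continuous_const).div_const _)
  exact (continuous_const.mul (((continuous_const.add (hd j)).rpow_const
    fun t => Or.inl (hpos t j).ne'))).sub continuous_const

lemma epsGlob_update_sub_epsGlob_ge (hα : 0 ≤ α) (hβ : 0 ≤ β) (hϱ : 0 ≤ ϱ) {d : Fin N → ℝ}
    {i : Fin N} {y : ℝ} (hx : 0 < L i + d i) (hy : 0 < L i + y) :
    -(α * β / (N * ϱ)) * epsGlob N α β δ ϱ L d * (L i + d i) ^ (-(β + 1)) * (y - d i) ≤
      epsGlob N α β δ ϱ L (update d i y) - epsGlob N α β δ ϱ L d := by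
  set s := α / (N * ϱ) * ((L i + y) ^ (-β) - (L i + d i) ^ (-β))
  have htangent : -(α * β / (N * ϱ)) * (L i + d i) ^ (-(β + 1)) * (y - d i) ≤ s := by
    have := rpow_neg_tangent_le hβ hx hy
    calc _ = α / (N * ϱ) * (-β * (L i + d i) ^ (-(β + 1)) * (y - d i)) := by ring
      _ ≤ s := mul_le_mul_of_nonneg_left (by linarith) (by positivity)
  have hε : 0 < epsGlob N α β δ ϱ L d := exp_pos _
  rw [epsGlob_update]
  calc _ = epsGlob N α β δ ϱ L d * (-(α * β / (N * ϱ)) * (L i + d i) ^ (-(β + 1)) * (y - d i)) := by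
        ring
    _ ≤ epsGlob N α β δ ϱ L d * (exp s - 1) := by gcongr; linarith [add_one_le_exp s]
    _ = _ := by ring

/-- The weight `P_i` with which organization `i` values the global error: as `ε(d)` with the `i`-th
coordinate set to `0` does not depend on `d i`, `U_i(d) = -P_i · ε(d) - c_i · d_i` plus terms
independent of `d i`. -/
def errorWeight (ψ φ : Fin N → ℝ) (γ : Fin N → Fin N → ℝ) (ξ : ℝ) (i : Fin N) : ℝ :=
  ψ i - ∑ j ∈ univ.erase i, (ξ - φ j) * γ i j

variable {c ψ φ K : Fin N → ℝ} {γ : Fin N → Fin N → ℝ} {ξ ε0 : ℝ}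

lemma errorWeight_pos {i : Fin N} (hψ : 0 < ψ i) (hγ : ∀ j, 0 ≤ γ i j) (hξ : ∀ j, ξ ≤ φ j) :
    0 < errorWeight ψ φ γ ξ i := by
  have : ∑ j ∈ univ.erase i, (ξ - φ j) * γ i j ≤ 0 :=
    sum_nonpos fun j _ => mul_nonpos_of_nonpos_of_nonneg (sub_nonpos.2 (hξ j)) (hγ j)
  unfold errorWeight
  linarith

lemma utility_update_sub_utility (i : Fin N) (d : Fin N → ℝ) (y : ℝ) :
    utility N α β δ ϱ L c ψ φ K γ ξ ε0 i (update d i y) - utility N α β δ ϱ L c ψ φ K γ ξ ε0 i d =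
      errorWeight ψ φ γ ξ i * (epsGlob N α β δ ϱ L d - epsGlob N α β δ ϱ L (update d i y))
        - c i * (y - d i) := by
  simp only [utility, errorWeight, update_idem, update_self, ← sum_mul]
  ring

lemma utility_update_le_of_first_order_condition {d : Fin N → ℝ} {i : Fin N} {y : ℝ}
    (hα : 0 ≤ α) (hβ : 0 ≤ β) (hϱ : 0 ≤ ϱ) (hP : 0 ≤ errorWeight ψ φ γ ξ i)
    (hx : 0 < L i + d i) (hy : 0 < L i + y)
    (hfoc : 0 ≤ (c i - errorWeight ψ φ γ ξ i * (α * β / (N * ϱ)) * epsGlob N α β δ ϱ L d *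
      (L i + d i) ^ (-(β + 1))) * (y - d i)) :
    utility N α β δ ϱ L c ψ φ K γ ξ ε0 i (update d i y) ≤
      utility N α β δ ϱ L c ψ φ K γ ξ ε0 i d := by
  have hconvex :=
    mul_le_mul_of_nonneg_left (epsGlob_update_sub_epsGlob_ge (δ := δ) hα hβ hϱ hx hy) hP
  rw [← sub_nonpos, utility_update_sub_utility]
  linarith

end

theorem exists_nash_equilibrium_general (N : ℕ) (α β δ ϱ : ℝ) (hα : 0 < α) (hβ : 0 < β)
    (hϱ : 0 < ϱ) (L c ψ φ K : Fin N → ℝ)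
    (hL : ∀ i, 0 < L i) (hc : ∀ i, 0 < c i) (hψ : ∀ i, 0 < ψ i)
    (γ : Fin N → Fin N → ℝ) (hγ : ∀ i j, γ i j ∈ Set.Icc (0 : ℝ) 1)
    (ξ : ℝ) (hξ : ∀ j, ξ ≤ φ j) (ε0 : ℝ)
    (m M : ℝ) (hm : 0 ≤ m) (hmM : m < M) :
    ∃ dstar : Fin N → ℝ, (∀ i, dstar i ∈ Set.Icc m M) ∧
      ∀ i : Fin N, ∀ y ∈ Set.Icc m M,
        utility N α β δ ϱ L c ψ φ K γ ξ ε0 i (Function.update dstar i y)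
          ≤ utility N α β δ ϱ L c ψ φ K γ ξ ε0 i dstar := by
  have hP i := errorWeight_pos (hψ i) (fun j => (hγ i j).1) hξ
  set κ := α * β / (N * ϱ)
  -- `d e i` solves the first-order condition `c i = P_i κ e (L i + d i) ^ (-(β + 1))`, clamped
  set d : ℝ → Fin N → ℝ := fun e i =>
    max m (min M ((errorWeight ψ φ γ ξ i * κ * e / c i) ^ (β + 1)⁻¹ - L i))
  have hd_mem e i : d e i ∈ Set.Icc m M := ⟨le_max_left _ _, max_le hmM.le (min_le_left _ _)⟩
  have hd_pos e i : 0 < L i + d e i := by linarith [hL i, (hd_mem e i).1]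
  have hd_cont i : Continuous fun e => d e i :=
    continuous_const.max <| continuous_const.min <| .sub (.rpow_const
      ((continuous_const.mul continuous_id).div_const _) fun _ => Or.inr (by positivity))
      continuous_const
  have hε_le_M e : epsGlob N α β δ ϱ L (fun _ => M) ≤ epsGlob N α β δ ϱ L (d e) :=
    epsGlob_le_epsGlob_of_le hα.le hβ.le hϱ.le (hd_pos e) fun j => (hd_mem e j).2
  have hε_le_m {d'} (hd' : ∀ j, m ≤ d' j) :
      epsGlob N α β δ ϱ L d' ≤ epsGlob N α β δ ϱ L (fun _ => m) :=
    epsGlob_le_epsGlob_of_le hα.le hβ.le hϱ.le (fun j => by linarith [hL j]) hd'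
  obtain ⟨e, -, he⟩ := exists_mem_Icc_isFixedPt_of_mapsTo
    (continuous_epsGlob_comp hd_cont hd_pos).continuousOn (hε_le_m fun _ => hmM.le)
    fun e _ => ⟨hε_le_M e, hε_le_m fun j => (hd_mem e j).1⟩
  refine ⟨d e, hd_mem e, fun i y hy => ?_⟩
  have hk : 0 < errorWeight ψ φ γ ξ i * κ * e :=
    mul_pos (mul_pos (hP i) (by have := i.pos; positivity)) (he ▸ exp_pos _)
  refine utility_update_le_of_first_order_condition hα.le hβ.le hϱ.le (hP i).le (hd_pos e i)
    (by linarith [hL i, hy.1]) ?_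
  rw [he.eq]
  exact (monotoneOn_sub_mul_rpow_neg hk.le (by linarith)).mul_sub_max_min_nonneg
    (by simp only [Set.mem_Ioi]; linarith [rpow_pos_of_pos (div_pos hk (hc i)) (β + 1)⁻¹])
    (by rw [add_sub_cancel]; exact sub_mul_rpow_neg_eq_zero (hc i) hk (by linarith))
    (by simp only [Set.mem_Ioi]; linarith [hd_pos e i]) hy

/-- The game possesses a pure-strategy Nash equilibrium on the box
`∏_i [m, M]`. -/
theorem exists_nash_equilibrium (N : ℕ) (hN : 1 ≤ N) (α β δ ϱ : ℝ) (hα : 0 < α) (hβ : 0 < β)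
    (hϱ : 0 < ϱ) (hδ : 0 ≤ δ) (L c ψ φ K : Fin N → ℝ)
    (hL : ∀ i, 0 < L i) (hc : ∀ i, 0 < c i) (hψ : ∀ i, 0 < ψ i) (hφ : ∀ j, 0 < φ j)
    (hK : ∀ i, 0 ≤ K i)
    (γ : Fin N → Fin N → ℝ) (hγ : ∀ i j, γ i j ∈ Set.Icc (0 : ℝ) 1)
    (ξ : ℝ) (hξ0 : 0 ≤ ξ) (hξ : ∀ j, ξ ≤ φ j) (ε0 : ℝ) 
    (m M : ℝ) (hm : 0 ≤ m) (hmM : m < M) :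
    ∃ dstar : Fin N → ℝ, (∀ i, dstar i ∈ Set.Icc m M) ∧
      ∀ i : Fin N, ∀ y ∈ Set.Icc m M,
        utility N α β δ ϱ L c ψ φ K γ ξ ε0 i (Function.update dstar i y)
          ≤ utility N α β δ ϱ L c ψ φ K γ ξ ε0 i dstar :=
  exists_nash_equilibrium_general N α β δ ϱ hα hβ hϱ L c ψ φ K hL hc hψ γ hγ ξ hξ ε0 m M hm hmM
end

section
/- A profile d* ∈ ∏_{i<N} [m, M] is a pure-strategy Nash equilibrium of the game (i.e., for every i and every y ∈ [m, M], U_i(d* with i-th coordinate y) ≤ U_i(d*)) if and only if d* is a global minimizer of the potential F(d) = ε(d) − Σ_{i<N} (c_i/z_i)·d_i over the box ∏_{i<N} [m, M]. -/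
/-!
Since `U_i(d[i ↦ y]) - U_i(d) = z_i · (F(d[i ↦ y]) - F(d))` and `z_i < 0`, a Nash equilibrium is
exactly a coordinatewise minimiser of `F` on the box. Relative to `d*`,
`F(d) = ε(d*) · exp(Σ_j (h_j(d_j) - h_j(d*_j))) - Σ_j (c_j / z_j) d_j` with
`h_j(t) = α (L_j + t)^(-β) / (N ϱ)` convex. Bounding `exp u ≥ 1 + u` and each `h_j` by its tangent
at `d*_j` gives `F(d) - F(d*) ≥ Σ_j ∂_j F(d*) · (d_j - d*_j)`, and every term is nonnegative by
the one-sided first-order condition for the coordinatewise minimum at `d*`.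
-/

open Real Finset

theorem Finset.sum_apply_update {ι α M : Type*} [Fintype ι] [DecidableEq ι] [AddCommGroup M]
    (f : ι → α → M) (x : ι → α) (j : ι) (y : α) :
    ∑ l, f l (Function.update x j y l) = ∑ l, f l (x l) + (f j y - f j (x j)) := by
  rw [← sub_eq_iff_eq_add', ← sum_sub_distrib, sum_eq_single j (fun l _ hl => by simp [hl])
    (by simp)]
  simp

theorem Real.tangent_le_rpow_of_nonpos {p a b : ℝ} (hp : p ≤ 0) (ha : 0 < a) (hb : 0 < b) :
    a ^ p + p * a ^ (p - 1) * (b - a) ≤ b ^ p := by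
  have hu : 0 < b / a := div_pos hb ha
  have hbernoulli : 1 + p * (b / a - 1) ≤ (b / a) ^ p := calc
    1 + p * (b / a - 1) ≤ 1 + p * log (b / a) :=
      by nlinarith [log_le_sub_one_of_pos hu]
    _ ≤ (b / a) ^ p := by
      rw [rpow_def_of_pos hu, add_comm, mul_comm]; exact add_one_le_exp _
  calc a ^ p + p * a ^ (p - 1) * (b - a) = a ^ p * (1 + p * (b / a - 1)) := by
        rw [rpow_sub_one ha.ne']; field_simp
    _ ≤ a ^ p * (b / a) ^ p := by gcongr
    _ = b ^ p := by rw [div_rpow hb.le ha.le]; field_simp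

theorem IsMinOn.mul_sub_nonneg_of_hasDerivAt {g : ℝ → ℝ} {g' x y : ℝ} {S : Set ℝ}
    (hmin : IsMinOn g S x) (hS : Convex ℝ S) (hx : x ∈ S) (hy : y ∈ S) (hg : HasDerivAt g g' x) :
    0 ≤ g' * (y - x) := by
  have := hmin.localize.hasFDerivWithinAt_nonneg hg.hasDerivWithinAt.hasFDerivWithinAt
    (sub_mem_posTangentConeAt_of_segment_subset (hS.segment_subset hx hy))
  simpa [mul_comm] using this

theorem isMinOn_pi_of_forall_isMinOn_update {ι : Type*} [Fintype ι] [DecidableEq ι]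
    {S : ι → Set ℝ} (hS : ∀ j, Convex ℝ (S j)) {x : ι → ℝ} (hx : ∀ j, x j ∈ S j)
    {h : ι → ℝ → ℝ} {h' : ι → ℝ} (hh : ∀ j, HasDerivAt (h j) (h' j) (x j))
    (htan : ∀ j, ∀ y ∈ S j, h j (x j) + h' j * (y - x j) ≤ h j y)
    {E : ℝ} (hE : 0 ≤ E) (k : ι → ℝ) {G : (ι → ℝ) → ℝ}
    (hG : ∀ d, G d = E * exp (∑ l, (h l (d l) - h l (x l))) + ∑ l, k l * d l)
    (hmin : ∀ j, IsMinOn (fun y => G (Function.update x j y)) (S j) (x j)) :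
    IsMinOn G (Set.univ.pi S) x := by
  have hfermat : ∀ j, ∀ y ∈ S j, 0 ≤ (E * h' j + k j) * (y - x j) := by
    intro j y hy
    have hGj : ∀ t, G (Function.update x j t)
        = E * exp (h j t - h j (x j)) + (∑ l, k l * x l + k j * (t - x j)) := by
      intro t
      rw [hG, sum_apply_update (fun l t => h l t - h l (x l)),
        sum_apply_update (fun l t => k l * t)]
      simp only [sub_self, sum_const_zero, zero_add, sub_zero]
      ring
    have hderiv : HasDerivAt (fun t => G (Function.update x j t)) (E * h' j + k j) (x j) := by
      simp only [hGj]
      refine ((((hh j).sub_const (h j (x j))).exp.const_mul E).add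
        ((((hasDerivAt_id' (x j)).sub_const (x j)).const_mul (k j)).const_add
          (∑ l, k l * x l))).congr_deriv ?_
      simp
    exact (hmin j).mul_sub_nonneg_of_hasDerivAt (hS j) (hx j) hy hderiv
  intro d hd
  rw [Set.mem_univ_pi] at hd
  have htan_sum : ∑ l, (E * h' l + k l) * (d l - x l)
      ≤ E * ∑ l, (h l (d l) - h l (x l)) + (∑ l, k l * d l - ∑ l, k l * x l) := by
    rw [mul_sum, ← sum_sub_distrib, ← sum_add_distrib]
    gcongr with l
    nlinarith [mul_le_mul_of_nonneg_left (htan l (d l) (hd l)) hE]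
  calc G x = E + ∑ l, k l * x l := by simp [hG]
    _ ≤ E + E * ∑ l, (h l (d l) - h l (x l)) + ∑ l, k l * d l := by
      linarith [sum_nonneg fun l (_ : l ∈ univ) => hfermat l (d l) (hd l)]
    _ ≤ G d := by
      rw [hG]
      nlinarith [mul_le_mul_of_nonneg_left (add_one_le_exp (∑ l, (h l (d l) - h l (x l)))) hE]

theorem IsMinOn.comp_update {ι α β : Type*} [DecidableEq ι] [Preorder β] {S : ι → Set α}
    {G : (ι → α) → β} {x : ι → α} (hmin : IsMinOn G (Set.univ.pi S) x)
    (hx : x ∈ Set.univ.pi S) (j : ι) :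
    IsMinOn (fun y => G (Function.update x j y)) (S j) (x j) := by
  intro y hy
  simpa using hmin (Set.update_mem_pi_iff_of_mem hx |>.2 fun _ => hy)

-- `ε(d) = C · exp (Σ_j errExponent j (d j))` for a constant `C`.
noncomputable def errExponent (N : ℕ) (α β ϱ : ℝ) (L : Fin N → ℝ) (j : Fin N) (t : ℝ) : ℝ :=
  α * (L j + t) ^ (-β) / (N * ϱ)

section Potential

variable {N : ℕ} {α β δ ϱ : ℝ} {L c z : Fin N → ℝ}

theorem epsGlob_eq_mul_exp (d d' : Fin N → ℝ) :
    epsGlob N α β δ ϱ L d = epsGlob N α β δ ϱ L d'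
      * exp (∑ j, (errExponent N α β ϱ L j (d j) - errExponent N α β ϱ L j (d' j))) := by
  simp only [epsGlob, errExponent, sum_sub_distrib, ← sum_div, ← exp_add]
  congr 1
  ring

theorem hasDerivAt_errExponent {j : Fin N} {x : ℝ} (hx : 0 < L j + x) :
    HasDerivAt (errExponent N α β ϱ L j) (α * (-β * (L j + x) ^ (-β - 1)) / (N * ϱ)) x := by
  have := (((hasDerivAt_id' x).const_add (L j)).rpow_const (p := -β) (Or.inl hx.ne')).const_mul α
  exact (this.div_const ((N : ℝ) * ϱ)).congr_deriv (by ring)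

theorem errExponent_tangent_le (hα : 0 ≤ α) (hβ : 0 ≤ β) (hϱ : 0 ≤ ϱ) {j : Fin N} {x y : ℝ}
    (hx : 0 < L j + x) (hy : 0 < L j + y) :
    errExponent N α β ϱ L j x + α * (-β * (L j + x) ^ (-β - 1)) / (N * ϱ) * (y - x)
      ≤ errExponent N α β ϱ L j y := by
  have hscale : 0 ≤ α / (N * ϱ) := by positivity
  have := mul_le_mul_of_nonneg_left
    (Real.tangent_le_rpow_of_nonpos (neg_nonpos.2 hβ) hx hy) hscale
  calc _ = α / (N * ϱ) * ((L j + x) ^ (-β)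
          + -β * (L j + x) ^ (-β - 1) * (L j + y - (L j + x))) := by
        simp only [errExponent]; ring
    _ ≤ _ := this
    _ = _ := by simp only [errExponent]; ring

theorem potential_eq_mul_exp_add (d d' : Fin N → ℝ) :
    potential N α β δ ϱ L c z d = epsGlob N α β δ ϱ L d'
      * exp (∑ j, (errExponent N α β ϱ L j (d j) - errExponent N α β ϱ L j (d' j)))
      + ∑ j, -(c j / z j) * d j := by
  simp only [potential, epsGlob_eq_mul_exp d d', neg_mul, sum_neg_distrib, sub_eq_add_neg]

theorem isMinOn_potential_of_forall_isMinOn_update (hα : 0 ≤ α) (hβ : 0 ≤ β) (hϱ : 0 ≤ ϱ)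
    {m M : ℝ} (hL : ∀ j, 0 < L j + m) {x : Fin N → ℝ} (hx : ∀ j, x j ∈ Set.Icc m M)
    (hmin : ∀ j, IsMinOn (fun y => potential N α β δ ϱ L c z (Function.update x j y))
      (Set.Icc m M) (x j)) :
    IsMinOn (potential N α β δ ϱ L c z) (Set.univ.pi fun _ => Set.Icc m M) x := by
  have hpos : ∀ j, ∀ y ∈ Set.Icc m M, 0 < L j + y := fun j y hy => by linarith [hL j, hy.1]
  exact isMinOn_pi_of_forall_isMinOn_update (fun _ => convex_Icc m M) hx
    (fun j => hasDerivAt_errExponent (hpos j _ (hx j)))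
    (fun j y hy => errExponent_tangent_le hα hβ hϱ (hpos j _ (hx j)) (hpos j y hy))
    (exp_pos _).le _ (fun d => potential_eq_mul_exp_add d x) hmin

theorem potential_update_sub (d : Fin N → ℝ) (i : Fin N) (y : ℝ) :
    potential N α β δ ϱ L c z (Function.update d i y) - potential N α β δ ϱ L c z d
      = epsGlob N α β δ ϱ L (Function.update d i y) - epsGlob N α β δ ϱ L d
        - c i / z i * (y - d i) := by
  simp only [potential, sum_apply_update (fun j t => c j / z j * t)]
  ring

end Potential

section Utility

variable {N : ℕ} {α β δ ϱ : ℝ} {L c ψ φ K : Fin N → ℝ} {γ : Fin N → Fin N → ℝ} {ξ ε0 : ℝ}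

theorem zWeight_neg (hγ : ∀ i j, 0 ≤ γ i j) (hξ : ∀ j, ξ ≤ φ j) (hψ : ∀ i, 0 < ψ i) (i : Fin N) :
    zWeight N ψ φ γ ξ i < 0 := by
  have : ∑ j ∈ univ.erase i, γ i j * (ξ - φ j) ≤ 0 :=
    sum_nonpos fun j _ => mul_nonpos_of_nonneg_of_nonpos (hγ i j) (sub_nonpos.2 (hξ j))
  rw [zWeight]
  linarith [hψ i]

theorem utility_update_sub {i : Fin N} (hz : zWeight N ψ φ γ ξ i ≠ 0) (d : Fin N → ℝ) (y : ℝ) :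
    utility N α β δ ϱ L c ψ φ K γ ξ ε0 i (Function.update d i y)
        - utility N α β δ ϱ L c ψ φ K γ ξ ε0 i d
      = zWeight N ψ φ γ ξ i * (potential N α β δ ϱ L c (zWeight N ψ φ γ ξ) (Function.update d i y)
        - potential N α β δ ϱ L c (zWeight N ψ φ γ ξ) d) := by
  have hcompetition : ∀ X, ∑ j ∈ univ.erase i, (ξ - φ j) * γ i j * X
      = (zWeight N ψ φ γ ξ i + ψ i) * X := fun X => by
    rw [zWeight, sub_add_cancel, sum_mul]
    exact sum_congr rfl fun j _ => by ring
  rw [potential_update_sub, utility, utility, Function.update_idem, Function.update_self,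
    hcompetition, hcompetition]
  field_simp
  ring

theorem utility_update_le_iff {i : Fin N} (hz : zWeight N ψ φ γ ξ i < 0) (d : Fin N → ℝ) (y : ℝ) :
    utility N α β δ ϱ L c ψ φ K γ ξ ε0 i (Function.update d i y)
        ≤ utility N α β δ ϱ L c ψ φ K γ ξ ε0 i d
      ↔ potential N α β δ ϱ L c (zWeight N ψ φ γ ξ) d
        ≤ potential N α β δ ϱ L c (zWeight N ψ φ γ ξ) (Function.update d i y) := by
  rw [← sub_nonpos, utility_update_sub hz.ne, ← mul_zero (zWeight N ψ φ γ ξ i),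
    mul_le_mul_left_of_neg hz, sub_nonneg]

end Utility

theorem nash_iff_potential_minimizer_general (N : ℕ) (α β δ ϱ : ℝ) (hα : 0 < α) (hβ : 0 < β)
    (hϱ : 0 < ϱ) (L c ψ φ K : Fin N → ℝ)
    (hL : ∀ i, 0 < L i) (hψ : ∀ i, 0 < ψ i)
    (γ : Fin N → Fin N → ℝ) (hγ : ∀ i j, γ i j ∈ Set.Icc (0 : ℝ) 1)
    (ξ : ℝ) (hξ : ∀ j, ξ ≤ φ j) (ε0 : ℝ) 
    (m M : ℝ) (hm : 0 ≤ m)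
    (dstar : Fin N → ℝ) (hdstar : ∀ i, dstar i ∈ Set.Icc m M) :
    (∀ i : Fin N, ∀ y ∈ Set.Icc m M,
        utility N α β δ ϱ L c ψ φ K γ ξ ε0 i (Function.update dstar i y)
          ≤ utility N α β δ ϱ L c ψ φ K γ ξ ε0 i dstar)
      ↔ (∀ d : Fin N → ℝ, (∀ i, d i ∈ Set.Icc m M) →
          potential N α β δ ϱ L c (zWeight N ψ φ γ ξ) dstar
            ≤ potential N α β δ ϱ L c (zWeight N ψ φ γ ξ) d) := by
  have hz := zWeight_neg (fun i j => (hγ i j).1) hξ hψ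
  have hbox : dstar ∈ Set.univ.pi fun _ => Set.Icc m M := Set.mem_univ_pi.2 hdstar
  calc _ ↔ ∀ i, IsMinOn (fun y => potential N α β δ ϱ L c (zWeight N ψ φ γ ξ)
        (Function.update dstar i y)) (Set.Icc m M) (dstar i) := by
        simp only [utility_update_le_iff (hz _), isMinOn_iff, Function.update_eq_self]
    _ ↔ IsMinOn (potential N α β δ ϱ L c (zWeight N ψ φ γ ξ))
        (Set.univ.pi fun _ => Set.Icc m M) dstar :=
      ⟨isMinOn_potential_of_forall_isMinOn_update hα.le hβ.le hϱ.le
          (fun j => by linarith [hL j]) hdstar,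
        fun hmin => hmin.comp_update hbox⟩
    _ ↔ _ := by simp only [isMinOn_iff, Set.mem_univ_pi]

/-- A profile `d*` in the box is a pure-strategy Nash equilibrium iff
it is a global minimizer of the potential `F` over the box `∏_i [m, M]`. -/
theorem nash_iff_potential_minimizer (N : ℕ) (hN : 1 ≤ N) (α β δ ϱ : ℝ) (hα : 0 < α) (hβ : 0 < β)
    (hϱ : 0 < ϱ) (hδ : 0 ≤ δ) (L c ψ φ K : Fin N → ℝ)
    (hL : ∀ i, 0 < L i) (hc : ∀ i, 0 < c i) (hψ : ∀ i, 0 < ψ i) (hφ : ∀ j, 0 < φ j)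
    (hK : ∀ i, 0 ≤ K i)
    (γ : Fin N → Fin N → ℝ) (hγ : ∀ i j, γ i j ∈ Set.Icc (0 : ℝ) 1)
    (ξ : ℝ) (hξ0 : 0 ≤ ξ) (hξ : ∀ j, ξ ≤ φ j) (ε0 : ℝ) 
    (m M : ℝ) (hm : 0 ≤ m) (hmM : m < M)
    (dstar : Fin N → ℝ) (hdstar : ∀ i, dstar i ∈ Set.Icc m M) :
    (∀ i : Fin N, ∀ y ∈ Set.Icc m M,
        utility N α β δ ϱ L c ψ φ K γ ξ ε0 i (Function.update dstar i y)
          ≤ utility N α β δ ϱ L c ψ φ K γ ξ ε0 i dstar)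
      ↔ (∀ d : Fin N → ℝ, (∀ i, d i ∈ Set.Icc m M) →
          potential N α β δ ϱ L c (zWeight N ψ φ γ ξ) dstar
            ≤ potential N α β δ ϱ L c (zWeight N ψ φ γ ξ) d) :=
  nash_iff_potential_minimizer_general N α β δ ϱ hα hβ hϱ L c ψ φ K hL hψ γ hγ ξ hξ ε0 m M hm dstar
    hdstar
end

section
/- A profile d* ∈ ∏_{i<N} [m, M] is a global minimizer of the potential F over the box ∏_{i<N} [m, M] if and only if for every organization i, writing G_i = −(α·β/(N·ϱ))·(L_i + d*_i)^(−β−1)·exp((A_1 − 1)/ϱ) − c_i/z_i with A_1 = (1/N)·Σ_{j<N} (α·(L_j + d*_j)^(−β) − δ), one of the following holds: (1) d*_i = m and G_i ≥ 0; (2) d*_i = M and G_i ≤ 0; (3) G_i = 0. -/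
open Real Finset

/-!
The potential is convex on the box: `x ↦ x ^ (-β)` is convex on `(0, ∞)`, sums and nonnegative
multiples preserve convexity, `exp` is convex and increasing, and the remaining term is linear.
For a differentiable convex function, `d*` minimizes it on a convex set `s` iff the derivative
at `d*` is nonnegative in every direction `d - d*` with `d ∈ s`. On a box this variational
inequality splits into one inequality per coordinate, which is the stated case distinction.
-/

theorem ConvexOn.sum {ι E : Type*} [AddCommGroup E] [Module ℝ E] {s : Set E} {t : Finset ι}
    {f : ι → E → ℝ} (hs : Convex ℝ s) (hf : ∀ i ∈ t, ConvexOn ℝ s (f i)) :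
    ConvexOn ℝ s fun x => ∑ i ∈ t, f i x := by
  induction t using Finset.cons_induction with
  | empty => simpa using convexOn_const 0 hs
  | cons i t _ ih =>
    simp only [Finset.sum_cons]
    exact (hf i (t.mem_cons_self i)).add (ih fun j hj => hf j (Finset.mem_cons_of_mem hj))

theorem ConvexOn.exp {E : Type*} [AddCommGroup E] [Module ℝ E] {s : Set E} {f : E → ℝ}
    (hf : ConvexOn ℝ s f) : ConvexOn ℝ s fun x => Real.exp (f x) :=
  ⟨hf.1, fun _ hx _ hy _ _ ha hb hab =>
    (exp_le_exp.2 (hf.2 hx hy ha hb hab)).trans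
      (convexOn_exp.2 (Set.mem_univ _) (Set.mem_univ _) ha hb hab)⟩

theorem convexOn_rpow_of_nonpos {p : ℝ} (hp : p ≤ 0) :
    ConvexOn ℝ (Set.Ioi 0) fun x : ℝ => x ^ p := by
  refine ((strictConcaveOn_log_Ioi.concaveOn.neg.smul (neg_nonneg.2 hp)).exp).congr
    fun x hx => ?_
  simp [rpow_def_of_pos hx, mul_comm]

theorem ConvexOn.add_fderiv_sub_le {E : Type*} [NormedAddCommGroup E] [NormedSpace ℝ E]
    {s : Set E} {f : E → ℝ} {f' : E →L[ℝ] ℝ} {x y : E} (hf : ConvexOn ℝ s f) (hx : x ∈ s)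
    (hy : y ∈ s) (hf' : HasFDerivWithinAt f f' s x) : f x + f' (y - x) ≤ f y := by
  let g : ℝ →ᵃ[ℝ] E := AffineMap.lineMap x y
  have hg : Set.MapsTo g (Set.Icc 0 1) s := fun t ht => hf.1.segment_subset hx hy
    (segment_eq_image_lineMap ℝ x y ▸ Set.mem_image_of_mem _ ht)
  have hconv : ConvexOn ℝ (Set.Icc 0 1) (f ∘ g) :=
    (hf.comp_affineMap g).subset hg (convex_Icc 0 1)
  have hderiv : HasDerivWithinAt (f ∘ g) (f' (y - x)) (Set.Icc 0 1) 0 := by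
    have hx0 : g 0 = x := AffineMap.lineMap_apply_zero x y
    exact (hx0 ▸ hf').comp_hasDerivWithinAt (0 : ℝ)
      (AffineMap.hasDerivAt_lineMap (a := x) (b := y) (x := 0)).hasDerivWithinAt hg
  have hslope := hconv.le_slope_of_hasDerivWithinAt (by simp) (by simp) zero_lt_one hderiv
  simp only [slope_def_field, Function.comp_apply, g, AffineMap.lineMap_apply_zero,
    AffineMap.lineMap_apply_one, sub_zero, div_one] at hslope
  linarith

theorem ConvexOn.isMinOn_iff_fderiv_nonneg {E : Type*} [NormedAddCommGroup E]
    [NormedSpace ℝ E] {s : Set E} {f : E → ℝ} {f' : E →L[ℝ] ℝ} {x : E} (hf : ConvexOn ℝ s f)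
    (hx : x ∈ s) (hf' : HasFDerivWithinAt f f' s x) :
    IsMinOn f s x ↔ ∀ y ∈ s, 0 ≤ f' (y - x) :=
  ⟨fun hmin y hy => hmin.localize.hasFDerivWithinAt_nonneg hf'
      (sub_mem_posTangentConeAt_of_segment_subset (hf.1.segment_subset hx hy)),
    fun h => isMinOn_iff.2 fun y hy => by linarith [hf.add_fderiv_sub_le hx hy hf', h y hy]⟩

theorem sum_mul_sub_nonneg_on_pi_iff {ι : Type*} [Fintype ι] [DecidableEq ι]
    {S : ι → Set ℝ} {g x : ι → ℝ} (hx : x ∈ Set.univ.pi S) :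
    (∀ y ∈ Set.univ.pi S, 0 ≤ ∑ i, g i * (y i - x i)) ↔
      ∀ i, ∀ t ∈ S i, 0 ≤ g i * (t - x i) := by
  refine ⟨fun h i t ht => ?_, fun h y hy => Finset.sum_nonneg fun i _ => h i _ (hy i trivial)⟩
  have hupdate : Function.update x i t ∈ Set.univ.pi S :=
    (Set.update_mem_pi_iff_of_mem hx).2 fun _ => ht
  have hsum : ∑ j, g j * (Function.update x i t j - x j) = g i * (t - x i) := by
    rw [Finset.sum_eq_single_of_mem i (Finset.mem_univ i) fun j _ hj => by simp [hj]]
    simp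
  exact hsum ▸ h _ hupdate

theorem mul_sub_nonneg_on_Icc_iff {g m M x : ℝ} (hx : x ∈ Set.Icc m M) :
    (∀ t ∈ Set.Icc m M, 0 ≤ g * (t - x)) ↔ (x = m ∧ 0 ≤ g) ∨ (x = M ∧ g ≤ 0) ∨ g = 0 := by
  constructor
  · intro h
    rcases lt_trichotomy g 0 with hg | hg | hg
    · have := h M ⟨hx.1.trans hx.2, le_rfl⟩
      exact Or.inr (Or.inl ⟨le_antisymm hx.2 (by nlinarith), hg.le⟩)
    · exact Or.inr (Or.inr hg)
    · have := h m ⟨le_rfl, hx.1.trans hx.2⟩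
      exact Or.inl ⟨le_antisymm (by nlinarith) hx.1, hg.le⟩
  · rintro (⟨rfl, hg⟩ | ⟨rfl, hg⟩ | rfl) t ht
    · exact mul_nonneg hg (sub_nonneg.2 ht.1)
    · exact mul_nonneg_of_nonpos_of_nonpos hg (sub_nonpos.2 ht.2)
    · simp

theorem ConvexOn.comp_const_add_apply {ι : Type*} {f : ℝ → ℝ} (hf : ConvexOn ℝ (Set.Ioi 0) f)
    (L : ι → ℝ) (j : ι) :
    ConvexOn ℝ (Set.univ.pi fun i => Set.Ioi (-L i)) fun d => f (L j + d j) := by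
  refine ⟨convex_pi fun i _ => convex_Ioi (-L i), fun x hx y hy a b ha hb hab => ?_⟩
  have hxj : 0 < L j + x j := neg_lt_iff_pos_add'.1 (hx j trivial : -L j < x j)
  have hyj : 0 < L j + y j := neg_lt_iff_pos_add'.1 (hy j trivial : -L j < y j)
  convert hf.2 hxj hyj ha hb hab using 2
  simp only [Pi.add_apply, Pi.smul_apply, smul_eq_mul]
  linear_combination L j * hab.symm

section Potential

variable {N : ℕ} {α β δ ϱ : ℝ} {L c z : Fin N → ℝ}

theorem convexOn_epsGlob (hα : 0 ≤ α) (hβ : 0 ≤ β) (hϱ : 0 ≤ ϱ) :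
    ConvexOn ℝ (Set.univ.pi fun j => Set.Ioi (-L j)) (epsGlob N α β δ ϱ L) := by
  have hsum : ConvexOn ℝ (Set.univ.pi fun j => Set.Ioi (-L j))
      fun d => ∑ j, (α * (L j + d j) ^ (-β) - δ) :=
    ConvexOn.sum (convex_pi fun j _ => convex_Ioi (-L j)) fun j _ =>
      ((((convexOn_rpow_of_nonpos (neg_nonpos.2 hβ)).comp_const_add_apply L j).smul hα).add_const
        (-δ)).congr fun d _ => by simp [sub_eq_add_neg]
  refine (((hsum.smul (by positivity : (0 : ℝ) ≤ 1 / N)).add_const (-1)).smul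
    (inv_nonneg.2 hϱ)).exp.congr fun d _ => ?_
  simp only [epsGlob, smul_eq_mul, Pi.add_apply]
  ring_nf

theorem convexOn_potential (hα : 0 ≤ α) (hβ : 0 ≤ β) (hϱ : 0 ≤ ϱ) :
    ConvexOn ℝ (Set.univ.pi fun j => Set.Ioi (-L j)) (potential N α β δ ϱ L c z) :=
  ((convexOn_epsGlob (δ := δ) hα hβ hϱ).sub
    ((∑ i, (c i / z i) • LinearMap.proj i).concaveOn
      (convex_pi fun j _ => convex_Ioi (-L j)))).congr fun d _ => by simp [potential]

variable (N α β δ ϱ L c z) in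
noncomputable def potentialGrad (d : Fin N → ℝ) (i : Fin N) : ℝ :=
  -(α * β / ((N : ℝ) * ϱ)) * (L i + d i) ^ (-β - 1) * epsGlob N α β δ ϱ L d - c i / z i

theorem hasFDerivAt_potential {d : Fin N → ℝ} (hd : ∀ j, L j + d j ≠ 0) :
    HasFDerivAt (potential N α β δ ϱ L c z)
      (∑ i, potentialGrad N α β δ ϱ L c z d i •
        (ContinuousLinearMap.proj i : (Fin N → ℝ) →L[ℝ] ℝ)) d := by
  have hsum : HasFDerivAt (fun x => ∑ j, (α * (L j + x j) ^ (-β) - δ))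
      (∑ j, (α * (-β * (L j + d j) ^ (-β - 1))) • ContinuousLinearMap.proj j) d :=
    HasFDerivAt.fun_sum fun j _ => by
      have hj : HasFDerivAt (fun x : Fin N → ℝ => L j + x j) (ContinuousLinearMap.proj j) d :=
        (hasFDerivAt_apply (𝕜 := ℝ) j d).const_add (L j)
      simpa only [smul_smul] using
        ((hj.rpow_const (p := -β) (Or.inl (hd j))).const_mul α).sub_const δ
  have hlin : HasFDerivAt (fun x : Fin N → ℝ => ∑ i, (c i / z i) * x i)
      (∑ i, (c i / z i) • ContinuousLinearMap.proj i) d :=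
    HasFDerivAt.fun_sum fun i _ => (hasFDerivAt_apply (𝕜 := ℝ) i d).const_mul (c i / z i)
  have hF : potential N α β δ ϱ L c z = fun x =>
      rexp (ϱ⁻¹ * (1 / (N : ℝ) * ∑ j, (α * (L j + x j) ^ (-β) - δ) - 1)) -
        ∑ i, c i / z i * x i := by
    funext x
    simp only [potential, epsGlob, div_eq_inv_mul]
  rw [hF]
  refine ((((hsum.const_mul (1 / (N : ℝ))).sub_const 1).const_mul ϱ⁻¹).exp.sub
    hlin).congr_fderiv ?_
  ext v
  simp only [potentialGrad, epsGlob, sub_apply, smul_apply, _root_.sum_apply,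
    ContinuousLinearMap.proj_apply, smul_eq_mul, sub_mul, Finset.sum_sub_distrib, Finset.mul_sum]
  congr 1
  refine Finset.sum_congr rfl fun j _ => ?_
  rw [div_eq_inv_mul _ ϱ]
  field_simp

end Potential

theorem potential_minimizer_iff_kkt_general (N : ℕ) (α β δ ϱ : ℝ) (hα : 0 < α) (hβ : 0 < β)
    (hϱ : 0 < ϱ) (L c z : Fin N → ℝ)
    (hL : ∀ i, 0 < L i)
    (m M : ℝ) (hm : 0 ≤ m)
    (dstar : Fin N → ℝ) (hdstar : ∀ i, dstar i ∈ Set.Icc m M) :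
    (∀ d : Fin N → ℝ, (∀ i, d i ∈ Set.Icc m M) →
        potential N α β δ ϱ L c z dstar ≤ potential N α β δ ϱ L c z d)
      ↔ (∀ i : Fin N,
          (dstar i = m ∧
              0 ≤ -(α * β / ((N : ℝ) * ϱ)) * (L i + dstar i) ^ (-β - 1) *
                    Real.exp (((1 / (N : ℝ)) *
                        ∑ j, (α * (L j + dstar j) ^ (-β) - δ) - 1) / ϱ)
                  - c i / z i)
          ∨ (dstar i = M ∧
              -(α * β / ((N : ℝ) * ϱ)) * (L i + dstar i) ^ (-β - 1) *
                    Real.exp (((1 / (N : ℝ)) *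
                        ∑ j, (α * (L j + dstar j) ^ (-β) - δ) - 1) / ϱ)
                  - c i / z i ≤ 0)
          ∨ (-(α * β / ((N : ℝ) * ϱ)) * (L i + dstar i) ^ (-β - 1) *
                  Real.exp (((1 / (N : ℝ)) *
                      ∑ j, (α * (L j + dstar j) ^ (-β) - δ) - 1) / ϱ)
                - c i / z i = 0)) := by
  set box := Set.univ.pi fun _ : Fin N => Set.Icc m M
  have hbox : box ⊆ Set.univ.pi fun j => Set.Ioi (-L j) :=
    Set.pi_mono fun j _ x hx => show -L j < x by linarith [hL j, hx.1]
  have hconv : ConvexOn ℝ box (potential N α β δ ϱ L c z) :=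
    (convexOn_potential hα.le hβ.le hϱ.le).subset hbox (convex_pi fun _ _ => convex_Icc m M)
  have hpos : ∀ j, 0 < L j + dstar j := fun j => by linarith [hL j, (hdstar j).1]
  have hderiv : HasFDerivWithinAt (potential N α β δ ϱ L c z) _ box dstar :=
    (hasFDerivAt_potential fun j => (hpos j).ne').hasFDerivWithinAt
  calc _ ↔ IsMinOn (potential N α β δ ϱ L c z) box dstar := by
        simp only [isMinOn_iff, box, Set.mem_univ_pi]
    _ ↔ ∀ d ∈ box, 0 ≤ ∑ i, potentialGrad N α β δ ϱ L c z dstar i * (d i - dstar i) := by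
        rw [hconv.isMinOn_iff_fderiv_nonneg (Set.mem_univ_pi.2 hdstar) hderiv]
        simp
    _ ↔ ∀ i, ∀ t ∈ Set.Icc m M, 0 ≤ potentialGrad N α β δ ϱ L c z dstar i * (t - dstar i) :=
        sum_mul_sub_nonneg_on_pi_iff (Set.mem_univ_pi.2 hdstar)
    _ ↔ _ := forall_congr' fun i => mul_sub_nonneg_on_Icc_iff (hdstar i)

/-- A profile `d*` in the box is a global minimizer of the potential
`F` over `∏_i [m, M]` iff for every `i`, with
`G_i = −(α·β/(N·ϱ))·(L_i + d*_i)^(−β−1)·exp((A_1 − 1)/ϱ) − c_i/z_i`, one of the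
following holds: `d*_i = m` and `G_i ≥ 0`; `d*_i = M` and `G_i ≤ 0`; or `G_i = 0`. -/
theorem potential_minimizer_iff_kkt (N : ℕ) (hN : 1 ≤ N) (α β δ ϱ : ℝ) (hα : 0 < α) (hβ : 0 < β)
    (hϱ : 0 < ϱ) (hδ : 0 ≤ δ) (L c z : Fin N → ℝ)
    (hL : ∀ i, 0 < L i) (hc : ∀ i, 0 < c i) (hz : ∀ i, z i < 0)
    (m M : ℝ) (hm : 0 ≤ m) (hmM : m < M)
    (dstar : Fin N → ℝ) (hdstar : ∀ i, dstar i ∈ Set.Icc m M) :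
    (∀ d : Fin N → ℝ, (∀ i, d i ∈ Set.Icc m M) →
        potential N α β δ ϱ L c z dstar ≤ potential N α β δ ϱ L c z d)
      ↔ (∀ i : Fin N,
          (dstar i = m ∧
              0 ≤ -(α * β / ((N : ℝ) * ϱ)) * (L i + dstar i) ^ (-β - 1) *
                    Real.exp (((1 / (N : ℝ)) *
                        ∑ j, (α * (L j + dstar j) ^ (-β) - δ) - 1) / ϱ)
                  - c i / z i)
          ∨ (dstar i = M ∧
              -(α * β / ((N : ℝ) * ϱ)) * (L i + dstar i) ^ (-β - 1) *
                    Real.exp (((1 / (N : ℝ)) *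
                        ∑ j, (α * (L j + dstar j) ^ (-β) - δ) - 1) / ϱ)
                  - c i / z i ≤ 0)
          ∨ (-(α * β / ((N : ℝ) * ϱ)) * (L i + dstar i) ^ (-β - 1) *
                  Real.exp (((1 / (N : ℝ)) *
                      ∑ j, (α * (L j + dstar j) ^ (-β) - δ) - 1) / ϱ)
                - c i / z i = 0)) :=
  potential_minimizer_iff_kkt_general N α β δ ϱ hα hβ hϱ L c z hL m M hm dstar hdstar
end

section
/- Let d* ∈ ∏_{i<N} [m, M] be a global minimizer of the potential F over the box ∏_{i<N} [m, M], and suppose m < d*_i < M for some organization i. Then d*_i = (−A_2·N·ϱ/(α·β)·exp(−(A_1 − 1)/ϱ))^(−1/(β+1)) − L_i, where A_1 = (1/N)·Σ_{j<N} (α·(L_j + d*_j)^(−β) − δ) and A_2 = c_i/z_i (note A_2 < 0, so the base of the power is positive). -/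
open Real Finset

open Filter Topology

/-
Fermat's rule along coordinate `i`: moving only `d_i` inside the open interval `(m, M)` keeps
the profile in the box, so `t ↦ F(d*[i ↦ t])` has a local minimum at the interior point `d*_i`
and its derivative `ε(d*)·(−αβ/(Nϱ))·(L_i + d*_i)^(−β−1) − c_i/z_i` vanishes there. Since
`exp(−(A_1 − 1)/ϱ) = 1/ε(d*)`, the base of the closed form is exactly `(L_i + d*_i)^(−β−1)`,
and its `−1/(β+1)`-th power is `L_i + d*_i`.
-/

theorem isLocalMin_update_of_forall_le {ι X Y : Type*} [DecidableEq ι] [TopologicalSpace X]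
    [Preorder Y] {F : (ι → X) → Y} {s : Set X} {x : ι → X} (hx : ∀ j, x j ∈ s)
    (hmin : ∀ d : ι → X, (∀ j, d j ∈ s) → F x ≤ F d) {i : ι} (hi : s ∈ 𝓝 (x i)) :
    IsLocalMin (fun t => F (Function.update x i t)) (x i) := by
  filter_upwards [hi] with t ht
  rw [Function.update_eq_self]
  exact hmin _ <| (Function.forall_update_iff x fun _ y => y ∈ s).2 ⟨ht, fun j _ => hx j⟩

theorem hasDerivAt_sum_apply_update {ι 𝕜 F : Type*} [Fintype ι] [DecidableEq ι]
    [NontriviallyNormedField 𝕜] [NormedAddCommGroup F] [NormedSpace 𝕜 F]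
    {g : ι → 𝕜 → F} {g' : F} {d : ι → 𝕜} {i : ι} (h : HasDerivAt (g i) g' (d i)) :
    HasDerivAt (fun t => ∑ j, g j (Function.update d i t j)) g' (d i) := by
  have hsum : (fun t => ∑ j, g j (Function.update d i t j))
      = fun t => g i t + ∑ j ∈ univ \ {i}, g j (d j) := by
    funext t
    simp_rw [Function.apply_update g]
    exact sum_update_of_mem (mem_univ i) _ _
  rw [hsum]
  exact h.add_const _

theorem hasDerivAt_potential_update (N : ℕ) (α β δ ϱ : ℝ) (L c z d : Fin N → ℝ) (i : Fin N)
    (hx : L i + d i ≠ 0) :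
    HasDerivAt (fun t => potential N α β δ ϱ L c z (Function.update d i t))
      (epsGlob N α β δ ϱ L d * (1 / N * (α * (-β * (L i + d i) ^ (-β - 1))) / ϱ) - c i / z i)
      (d i) := by
  have herr : HasDerivAt (fun t => ∑ j, (α * (L j + Function.update d i t j) ^ (-β) - δ))
      (α * (-β * (L i + d i) ^ (-β - 1))) (d i) :=
    hasDerivAt_sum_apply_update (g := fun j t => α * (L j + t) ^ (-β) - δ) <| by
      have hbase := (hasDerivAt_id (d i)).const_add (L i)
      simpa using ((hbase.rpow_const (p := -β) (Or.inl hx)).const_mul α).sub_const δ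
  have hcost : HasDerivAt (fun t => ∑ j, c j / z j * Function.update d i t j) (c i / z i) (d i) :=
    hasDerivAt_sum_apply_update (g := fun j t => c j / z j * t) <| by
      simpa using (hasDerivAt_id (d i)).const_mul (c i / z i)
  have hglob := (((herr.const_mul (1 / (N : ℝ))).sub_const 1).div_const ϱ).exp
  have hpot := hglob.sub hcost
  rw [Function.update_eq_self] at hpot
  exact hpot

theorem interior_minimizer_closed_form_general (N : ℕ) (α β δ ϱ : ℝ) (hα : 0 < α) (hβ : 0 < β)
    (hϱ : 0 < ϱ) (L c z : Fin N → ℝ)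
    (hL : ∀ i, 0 < L i)
    (m M : ℝ) (hm : 0 ≤ m)
    (dstar : Fin N → ℝ) (hdstar : ∀ i, dstar i ∈ Set.Icc m M)
    (hmin : ∀ d : Fin N → ℝ, (∀ i, d i ∈ Set.Icc m M) →
        potential N α β δ ϱ L c z dstar ≤ potential N α β δ ϱ L c z d)
    (i : Fin N) (hlo : m < dstar i) (hhi : dstar i < M) :
    dstar i
      = (-(c i / z i) * (N : ℝ) * ϱ / (α * β) *
            Real.exp (-((1 / (N : ℝ)) *
                ∑ j, (α * (L j + dstar j) ^ (-β) - δ) - 1) / ϱ)) ^ (-1 / (β + 1))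
        - L i := by
  have hx : 0 < L i + dstar i := by linarith [hL i]
  have hfoc := (isLocalMin_update_of_forall_le hdstar hmin (Icc_mem_nhds hlo hhi)).hasDerivAt_eq_zero
    (hasDerivAt_potential_update N α β δ ϱ L c z dstar i hx.ne')
  have hN0 : (N : ℝ) ≠ 0 := by exact_mod_cast i.pos.ne'
  have hbase : -(c i / z i) * (N : ℝ) * ϱ / (α * β) *
      Real.exp (-((1 / (N : ℝ)) * ∑ j, (α * (L j + dstar j) ^ (-β) - δ) - 1) / ϱ)
        = (L i + dstar i) ^ (-β - 1) := by
    rw [← sub_eq_zero.1 hfoc, neg_div, exp_neg, epsGlob]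
    field_simp
  have hexp : -1 / (β + 1) = (-β - 1)⁻¹ := by
    rw [← neg_add', inv_neg, neg_div, one_div]
  rw [hbase, hexp, rpow_rpow_inv hx.le (by linarith), add_sub_cancel_left]

/-- If `d*` globally minimizes the potential `F` over the box and
`m < d*_i < M`, then
`d*_i = (−A_2·N·ϱ/(α·β)·exp(−(A_1 − 1)/ϱ))^(−1/(β+1)) − L_i`, where
`A_1 = (1/N)·Σ_j (α·(L_j + d*_j)^(−β) − δ)` and `A_2 = c_i/z_i`. -/
theorem interior_minimizer_closed_form (N : ℕ) (hN : 1 ≤ N) (α β δ ϱ : ℝ) (hα : 0 < α) (hβ : 0 < β)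
    (hϱ : 0 < ϱ) (hδ : 0 ≤ δ) (L c z : Fin N → ℝ)
    (hL : ∀ i, 0 < L i) (hc : ∀ i, 0 < c i) (hz : ∀ i, z i < 0)
    (m M : ℝ) (hm : 0 ≤ m) (hmM : m < M)
    (dstar : Fin N → ℝ) (hdstar : ∀ i, dstar i ∈ Set.Icc m M)
    (hmin : ∀ d : Fin N → ℝ, (∀ i, d i ∈ Set.Icc m M) →
        potential N α β δ ϱ L c z dstar ≤ potential N α β δ ϱ L c z d)
    (i : Fin N) (hlo : m < dstar i) (hhi : dstar i < M) :
    dstar i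
      = (-(c i / z i) * (N : ℝ) * ϱ / (α * β) *
            Real.exp (-((1 / (N : ℝ)) *
                ∑ j, (α * (L j + dstar j) ^ (-β) - δ) - 1) / ϱ)) ^ (-1 / (β + 1))
        - L i :=
  interior_minimizer_closed_form_general N α β δ ϱ hα hβ hϱ L c z hL m M hm dstar hdstar hmin i hlo
    hhi
end

section
/- Fix a profile d ∈ ℝ^N with d_j > −L_j for all j, and define the N×N matrix H(d) with entries H_{jk}(d) = ε(d)·( (1/(N·ϱ))²·h'_j·h'_k + [j = k]·(1/(N·ϱ))·h''_j ), where h'_j = −α·β·(L_j + d_j)^(−β−1) and h''_j = α·β·(β+1)·(L_j + d_j)^(−β−2). Then H(d) (the Hessian of the potential F at d) is positive definite: for every nonzero v ∈ ℝ^N, Σ_{j,k} v_j·H_{jk}(d)·v_k > 0. -/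
/-!
With `c = 1/(Nϱ)`, the Hessian is `ε(d) • (u uᵀ + diag(c·h''))` where `u = c·h'`: a positive
multiple of a rank-one positive semidefinite matrix plus a diagonal matrix whose entries are
positive because `L_j + d_j > 0`.
-/

open Real Finset

open Matrix

theorem Matrix.PosDef.vecMulVec_star_add_diagonal {n R : Type*} [Fintype n] [DecidableEq n]
    [CommRing R] [PartialOrder R] [StarRing R] [StarOrderedRing R] [NoZeroDivisors R]
    (a : n → R) {b : n → R} (hb : ∀ i, 0 < b i) : (vecMulVec a (star a) + diagonal b).PosDef :=
  PosDef.posSemidef_add (posSemidef_vecMulVec_self_star a) (.diagonal hb)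

theorem Matrix.sum_sum_mul_mul_eq_dotProduct_mulVec {n R : Type*} [Fintype n] [CommSemiring R]
    (M : Matrix n n R) (v w : n → R) : ∑ j, ∑ k, v j * M j k * w k = v ⬝ᵥ (M *ᵥ w) := by
  simp only [dotProduct, mulVec, mul_sum, mul_assoc]

theorem hessian_posDef_general (N : ℕ) (hN : 1 ≤ N) (α β δ ϱ : ℝ) (hα : 0 < α) (hβ : 0 < β)
    (hϱ : 0 < ϱ) (L : Fin N → ℝ)
    (d : Fin N → ℝ) (hd : ∀ j, -(L j) < d j)
    (v : Fin N → ℝ) (hv : v ≠ 0) :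
    0 < ∑ j, ∑ k, v j *
        (epsGlob N α β δ ϱ L d *
          ((1 / ((N : ℝ) * ϱ)) ^ 2 * (-(α * β) * (L j + d j) ^ (-β - 1)) *
              (-(α * β) * (L k + d k) ^ (-β - 1))
            + (if j = k then (1 : ℝ) else 0) * (1 / ((N : ℝ) * ϱ)) *
              (α * β * (β + 1) * (L j + d j) ^ (-β - 2)))) * v k := by
  set c := 1 / ((N : ℝ) * ϱ)
  have hc : 0 < c := by
    have : (0 : ℝ) < N := by exact_mod_cast hN
    positivity
  have hb : ∀ j, 0 < c * (α * β * (β + 1) * (L j + d j) ^ (-β - 2)) := fun j => by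
    have hLd := neg_lt_iff_pos_add'.mp (hd j)
    positivity
  have hE : 0 < epsGlob N α β δ ϱ L d := exp_pos _
  have hH := ((PosDef.vecMulVec_star_add_diagonal
    (fun j => c * (-(α * β) * (L j + d j) ^ (-β - 1))) hb).smul hE).dotProduct_mulVec_pos hv
  rw [star_trivial, ← sum_sum_mul_mul_eq_dotProduct_mulVec] at hH
  refine hH.trans_eq (sum_congr rfl fun j _ => sum_congr rfl fun k _ => ?_)
  simp only [Matrix.smul_apply, Matrix.add_apply, vecMulVec_apply, diagonal_apply, star_trivial,
    smul_eq_mul]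
  split_ifs <;> ring

/-- The Hessian `H(d)` of the potential, with entries
`H_jk(d) = ε(d)·((1/(N·ϱ))²·h'_j·h'_k + [j = k]·(1/(N·ϱ))·h''_j)` where
`h'_j = −α·β·(L_j + d_j)^(−β−1)` and `h''_j = α·β·(β+1)·(L_j + d_j)^(−β−2)`, is
positive definite. -/
theorem hessian_posDef (N : ℕ) (hN : 1 ≤ N) (α β δ ϱ : ℝ) (hα : 0 < α) (hβ : 0 < β)
    (hϱ : 0 < ϱ) (hδ : 0 ≤ δ) (L : Fin N → ℝ) (hL : ∀ i, 0 < L i)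
    (d : Fin N → ℝ) (hd : ∀ j, -(L j) < d j)
    (v : Fin N → ℝ) (hv : v ≠ 0) :
    0 < ∑ j, ∑ k, v j *
        (epsGlob N α β δ ϱ L d *
          ((1 / ((N : ℝ) * ϱ)) ^ 2 * (-(α * β) * (L j + d j) ^ (-β - 1)) *
              (-(α * β) * (L k + d k) ^ (-β - 1))
            + (if j = k then (1 : ℝ) else 0) * (1 / ((N : ℝ) * ϱ)) *
              (α * β * (β + 1) * (L j + d j) ^ (-β - 2)))) * v k :=
  hessian_posDef_general N hN α β δ ϱ hα hβ hϱ L d hd v hv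
end
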